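/- Let d ≥ 1 and 1 < q < ∞. The Hardy-Littlewood maximal operator M is not bounded on the Morrey space M^1_q; that is, there is no constant C > 0 such that ‖Mf‖_{M^1_q} ≤ C · ‖f‖_{M^1_q} for every locally integrable f on ℝ^d with ‖f‖_{M^1_q} < ∞. -/

import Mathlib

open MeasureTheory Metric ENNReal

/-- The Morrey norm `‖F‖_{M^1_q}` (exponent `p = 1`) of an `ℝ≥0∞`-valued function on `ℝ^d`:
`sup_{a, r>0} |B(a,r)|^{1/q - 1} ∫_{B(a,r)} F`. -/
noncomputable def morreyNormOne (d : ℕ) (q : ℝ)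
    (F : EuclideanSpace ℝ (Fin d) → ℝ≥0∞) : ℝ≥0∞ :=
  ⨆ (a : EuclideanSpace ℝ (Fin d)) (r : ℝ) (_ : 0 < r),
    volume (ball a r) ^ (1 / q - 1) * ∫⁻ y in ball a r, F y

/-- The weak Morrey quasi-norm `‖F‖_{wM^1_q} := sup_{γ>0} γ · ‖χ_{{F > γ}}‖_{M^1_q}` of an
`ℝ≥0∞`-valued function. -/
noncomputable def weakMorreyNormOne (d : ℕ) (q : ℝ)
    (F : EuclideanSpace ℝ (Fin d) → ℝ≥0∞) : ℝ≥0∞ :=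
  ⨆ (γ : ℝ) (_ : 0 < γ),
    ENNReal.ofReal γ *
      morreyNormOne d q (Set.indicator {x | ENNReal.ofReal γ < F x} 1)

/-- The Hardy-Littlewood maximal function
`Mf(x) := sup_{r>0} (1/|B(x,r)|) ∫_{B(x,r)} |f(y)| dy`. -/
noncomputable def maximalFn (d : ℕ) (f : EuclideanSpace ℝ (Fin d) → ℝ)
    (x : EuclideanSpace ℝ (Fin d)) : ℝ≥0∞ :=
  ⨆ (r : ℝ) (_ : 0 < r),
    (volume (ball x r))⁻¹ * ∫⁻ y in ball x r, ENNReal.ofReal |f y|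

/-!
Place `n^d` bumps `B(j/n, ε)`, `j ∈ {0, …, n-1}^d`, with `ε^{1/q} = n ε`, and let `f` be the
indicator of their union. Since a ball of radius `r ≥ ε` meets at most `min(4nr + 1, n)^d` bumps,
`‖f‖_{M^1_q} ≤ 5^d ε^{d/q} |B(0,1)|^{1/q}`: up to `5^d`, the norm of a single bump.
On the dyadic annulus `2^k ε ≤ |x - j/n| < 2^{k+1} ε` one has `Mf ≥ 2^{-(k+2)d}`, so each of the
annuli `k < K` around each bump carries `∫ Mf ≥ |B(0, ε/4)|`. When `2^{K+1} n ε ≤ 1` they are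
pairwise disjoint and lie in `B(0, √d + 1)`, whence `‖Mf‖_{M^1_q} ≳ K n^d ε^d = K ε^{d/q}`.
As `K` is arbitrary, no bound `‖Mf‖ ≤ C ‖f‖` can hold.
-/

open Module Finset Filter Topology

theorem card_mul_pow_le_of_separated {E ι : Type*} [NormedAddCommGroup E] [NormedSpace ℝ E]
    [FiniteDimensional ℝ E] (s : Finset ι) (c : ι → E) {a : E} {ρ δ : ℝ} (hρ : 0 ≤ ρ)
    (hδ : 0 < δ) (hsep : ∀ i ∈ s, ∀ j ∈ s, i ≠ j → 2 * δ ≤ dist (c i) (c j))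
    (hc : ∀ i ∈ s, c i ∈ ball a ρ) :
    (#s : ℝ) * δ ^ finrank ℝ E ≤ (ρ + δ) ^ finrank ℝ E := by
  borelize E
  let μ : Measure E := Measure.addHaar
  have hdisj : (s : Set ι).PairwiseDisjoint fun i => ball (c i) δ := fun i hi j hj hij =>
    ball_disjoint_ball (by linarith [hsep i hi j hj hij])
  have hsub : ⋃ i ∈ s, ball (c i) δ ⊆ ball a (ρ + δ) := Set.iUnion₂_subset fun i hi =>
    ball_subset_ball' (by linarith [mem_ball.mp (hc i hi)])
  have hμ : (#s : ℝ≥0∞) * μ (ball 0 δ) ≤ μ (ball a (ρ + δ)) :=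
    calc (#s : ℝ≥0∞) * μ (ball 0 δ) = ∑ i ∈ s, μ (ball (c i) δ) := by
          simp [Measure.addHaar_ball_center]
      _ = μ (⋃ i ∈ s, ball (c i) δ) :=
          (measure_biUnion_finset hdisj fun _ _ => measurableSet_ball).symm
      _ ≤ μ (ball a (ρ + δ)) := measure_mono hsub
  rwa [Measure.addHaar_ball_of_pos μ 0 hδ, Measure.addHaar_ball_of_pos μ a (by linarith),
    ← mul_assoc, ← ENNReal.ofReal_natCast, ← ENNReal.ofReal_mul (by positivity),
    ENNReal.mul_le_mul_iff_left (measure_ball_pos μ _ one_pos).ne' measure_ball_lt_top.ne,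
    ENNReal.ofReal_le_ofReal_iff (by positivity)] at hμ

section Euclidean

variable {d : ℕ}

local notation "ℝᵈ" => EuclideanSpace ℝ (Fin d)

theorem volume_ball_eq_ofReal_pow_mul (a : ℝᵈ) {r : ℝ} (hr : 0 < r) :
    volume (ball a r) =
      ENNReal.ofReal r ^ d * volume (ball (0 : ℝᵈ) 1) := by
  rw [Measure.addHaar_ball_of_pos volume a hr, finrank_euclideanSpace_fin,
    ENNReal.ofReal_pow hr.le]

theorem volume_ball_rpow_eq_ofReal_pow_mul (a : ℝᵈ) {r : ℝ} (hr : 0 < r) (s : ℝ) :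
    volume (ball a r) ^ s =
      ENNReal.ofReal (r ^ s) ^ d * volume (ball (0 : ℝᵈ) 1) ^ s := by
  rw [volume_ball_eq_ofReal_pow_mul a hr,
    ENNReal.mul_rpow_of_ne_top (by simp) measure_ball_lt_top.ne,
    ← ENNReal.rpow_natCast_mul, mul_comm (d : ℝ), ENNReal.rpow_mul_natCast,
    ENNReal.ofReal_rpow_of_pos hr]

theorem two_mul_volume_ball_le (hd : 1 ≤ d) (c : ℝᵈ) {r : ℝ}
    (hr : 0 < r) : 2 * volume (ball c r) ≤ volume (ball c (2 * r)) := by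
  rw [volume_ball_eq_ofReal_pow_mul c hr, volume_ball_eq_ofReal_pow_mul c (by positivity),
    ENNReal.ofReal_mul zero_le_two, mul_pow, ENNReal.ofReal_ofNat, mul_assoc]
  gcongr
  calc (2 : ℝ≥0∞) = 2 ^ 1 := (pow_one 2).symm
    _ ≤ 2 ^ d := pow_le_pow_right₀ one_le_two hd

theorem le_morreyNormOne (q : ℝ) (F : ℝᵈ → ℝ≥0∞)
    (a : ℝᵈ) {r : ℝ} (hr : 0 < r) :
    volume (ball a r) ^ (1 / q - 1) * ∫⁻ y in ball a r, F y ≤ morreyNormOne d q F :=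
  le_iSup₂_of_le a r (le_iSup_of_le hr le_rfl)

theorem le_maximalFn (f : ℝᵈ → ℝ) (x : ℝᵈ)
    {r : ℝ} (hr : 0 < r) :
    (volume (ball x r))⁻¹ * ∫⁻ y in ball x r, ENNReal.ofReal |f y| ≤ maximalFn d f x :=
  le_iSup₂_of_le r hr le_rfl

theorem ofReal_div_pow_le_maximalFn {f : ℝᵈ → ℝ}
    {c x : ℝᵈ} {ε ρ : ℝ} (hε : 0 < ε) (hsub : ball c ε ⊆ ball x ρ)
    (hf : ∀ y ∈ ball c ε, 1 ≤ |f y|) :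
    ENNReal.ofReal (ε / ρ) ^ d ≤ maximalFn d f x := by
  have hρ : 0 < ρ := pos_of_mem_ball (hsub (mem_ball_self hε))
  have hint : volume (ball c ε) ≤ ∫⁻ y in ball x ρ, ENNReal.ofReal |f y| :=
    calc volume (ball c ε) = ∫⁻ _ in ball c ε, 1 := (setLIntegral_one _).symm
      _ ≤ ∫⁻ y in ball c ε, ENNReal.ofReal |f y| := lintegral_mono_ae <|
          ae_restrict_of_forall_mem measurableSet_ball fun y hy => one_le_ofReal.mpr (hf y hy)
      _ ≤ ∫⁻ y in ball x ρ, ENNReal.ofReal |f y| := lintegral_mono_set hsub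
  calc ENNReal.ofReal (ε / ρ) ^ d = (volume (ball x ρ))⁻¹ * volume (ball c ε) := by
        rw [volume_ball_eq_ofReal_pow_mul x hρ, volume_ball_eq_ofReal_pow_mul c hε,
          ← ENNReal.div_eq_inv_mul,
          ENNReal.mul_div_mul_right _ _ (measure_ball_pos volume _ one_pos).ne'
            measure_ball_lt_top.ne, ← ENNReal.ofReal_pow hε.le, ← ENNReal.ofReal_pow hρ.le,
          ← ENNReal.ofReal_div_of_pos (by positivity), ← ENNReal.ofReal_pow (by positivity),
          div_pow]
    _ ≤ (volume (ball x ρ))⁻¹ * ∫⁻ y in ball x ρ, ENNReal.ofReal |f y| := by gcongr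
    _ ≤ maximalFn d f x := le_maximalFn f x hρ

theorem volume_ball_le_lintegral_maximalFn_annulus (hd : 1 ≤ d)
    {f : ℝᵈ → ℝ} {c : ℝᵈ} {ε : ℝ} (hε : 0 < ε)
    (hf : ∀ y ∈ ball c ε, 1 ≤ |f y|) (k : ℕ) :
    volume (ball c (ε / 4)) ≤
      ∫⁻ x in ball c (2 ^ (k + 1) * ε) \ ball c (2 ^ k * ε), maximalFn d f x := by
  set A := ball c (2 ^ (k + 1) * ε) \ ball c (2 ^ k * ε)
  have hkε : 0 < 2 ^ k * ε := by positivity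
  have hpt : ∀ x ∈ A, ENNReal.ofReal (ε / (2 ^ (k + 2) * ε)) ^ d ≤ maximalFn d f x := by
    refine fun x hx => ofReal_div_pow_le_maximalFn hε (ball_subset_ball' ?_) hf
    have hx' : dist c x < 2 ^ (k + 1) * ε := by rw [dist_comm]; exact mem_ball.mp hx.1
    have : ε ≤ 2 ^ (k + 1) * ε := le_mul_of_one_le_left hε.le (one_le_pow₀ one_le_two)
    linarith [show (2 : ℝ) ^ (k + 2) * ε = 2 * (2 ^ (k + 1) * ε) by ring]
  have hA : volume (ball c (2 ^ k * ε)) ≤ volume A := by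
    refine ENNReal.le_sub_of_add_le_left measure_ball_lt_top.ne ?_ |>.trans le_measure_sdiff
    rw [← two_mul, pow_succ, mul_comm _ (2 : ℝ), mul_assoc]
    exact two_mul_volume_ball_le hd c hkε
  calc volume (ball c (ε / 4))
      = ENNReal.ofReal (ε / (2 ^ (k + 2) * ε)) ^ d * volume (ball c (2 ^ k * ε)) := by
        rw [volume_ball_eq_ofReal_pow_mul c (by positivity), volume_ball_eq_ofReal_pow_mul c hkε,
          ← mul_assoc, ← mul_pow,
          ← ENNReal.ofReal_mul (by positivity)]
        congr 3
        field_simp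
        ring
    _ ≤ ENNReal.ofReal (ε / (2 ^ (k + 2) * ε)) ^ d * volume A := by gcongr
    _ = ∫⁻ _ in A, ENNReal.ofReal (ε / (2 ^ (k + 2) * ε)) ^ d := (setLIntegral_const _ _).symm
    _ ≤ ∫⁻ x in A, maximalFn d f x :=
        lintegral_mono_ae <|
          ae_restrict_of_forall_mem (measurableSet_ball.diff measurableSet_ball) hpt

theorem natCast_mul_volume_ball_le_lintegral_maximalFn (hd : 1 ≤ d)
    {f : ℝᵈ → ℝ} {c : ℝᵈ} {ε : ℝ} (hε : 0 < ε)
    (hf : ∀ y ∈ ball c ε, 1 ≤ |f y|) (K : ℕ) :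
    K * volume (ball c (ε / 4)) ≤ ∫⁻ x in ball c (2 ^ K * ε), maximalFn d f x := by
  induction K with
  | zero => simp
  | succ k ih =>
    have hsub : ball c (2 ^ k * ε) ⊆ ball c (2 ^ (k + 1) * ε) :=
      ball_subset_ball (by gcongr; exacts [one_le_two, k.le_succ])
    rw [← lintegral_inter_add_sdiff _ _ measurableSet_ball, Set.inter_eq_right.mpr hsub,
      Nat.cast_succ, add_mul, one_mul]
    exact add_le_add ih (volume_ball_le_lintegral_maximalFn_annulus hd hε hf k)

noncomputable def gridPoint (n : ℕ) (j : Fin d → Fin n) : ℝᵈ :=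
  WithLp.toLp 2 fun i => (j i : ℝ) / n

theorem inv_le_dist_gridPoint {n : ℕ} {j k : Fin d → Fin n} (hjk : j ≠ k) :
    (n : ℝ)⁻¹ ≤ dist (gridPoint n j) (gridPoint n k) := by
  obtain ⟨i, hi⟩ := Function.ne_iff.mp hjk
  have hn : (0 : ℝ) < n := by exact_mod_cast (j i).pos
  have hjk : (1 : ℤ) ≤ |(j i : ℤ) - k i| :=
    Int.one_le_abs (sub_ne_zero.mpr (by exact_mod_cast Fin.val_ne_of_ne hi))
  calc (n : ℝ)⁻¹ ≤ |(j i : ℝ) - k i| / n := by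
        rw [inv_eq_one_div]; gcongr; exact_mod_cast hjk
    _ = dist (gridPoint n j i) (gridPoint n k i) := by
        simp [gridPoint, Real.dist_eq, ← sub_div, abs_div]
    _ ≤ dist (gridPoint n j) (gridPoint n k) := PiLp.dist_apply_le _ _ i

theorem norm_gridPoint_le (n : ℕ) (j : Fin d → Fin n) : ‖gridPoint n j‖ ≤ √d := by
  rw [EuclideanSpace.norm_eq]
  gcongr
  calc ∑ i, ‖gridPoint n j i‖ ^ 2 ≤ ∑ _i : Fin d, (1 : ℝ) := by
        gcongr with i
        have : (j i : ℝ) / n ≤ 1 :=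
          div_le_one_of_le₀ (by exact_mod_cast (j i).is_lt.le) (Nat.cast_nonneg n)
        simp only [gridPoint, PiLp.toLp_apply, Real.norm_eq_abs, sq_abs]
        nlinarith [div_nonneg (Nat.cast_nonneg (j i : ℕ)) (Nat.cast_nonneg (α := ℝ) n)]
    _ = d := by simp

theorem card_le_of_forall_gridPoint_mem_ball {n : ℕ} (hn : 0 < n) {a : ℝᵈ} {ρ : ℝ}
    (hρ : 0 ≤ ρ) (s : Finset (Fin d → Fin n)) (hs : ∀ j ∈ s, gridPoint n j ∈ ball a ρ) :
    (#s : ℝ) ≤ min (2 * n * ρ + 1) n ^ d := by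
  rcases min_choice (2 * n * ρ + 1) (n : ℝ) with h | h <;> rw [h]
  · have hδ : 0 < (2 * (n : ℝ))⁻¹ := by positivity
    have hpack := card_mul_pow_le_of_separated s (gridPoint n) hρ hδ
      (fun j _ k _ hjk => by
        rw [mul_inv, ← mul_assoc, mul_inv_cancel₀ two_ne_zero, one_mul]
        exact inv_le_dist_gridPoint hjk) hs
    rw [finrank_euclideanSpace_fin, ← le_div_iff₀ (by positivity), ← div_pow] at hpack
    refine hpack.trans_eq (congrArg (· ^ d) ?_)
    have : (n : ℝ) ≠ 0 := by positivity
    field_simp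
  · exact_mod_cast (card_le_univ s).trans (by simp)

theorem rpow_mul_min_le {q n ε r : ℝ} (hq : 1 ≤ q) (hn : 0 < n) (hε : 0 < ε) (hr : 0 < r)
    (hbal : ε ^ (1 / q) = n * ε) :
    r ^ (1 / q - 1) * min r (min (2 * n * (r + ε) + 1) n * ε) ≤ 5 * (n * ε) := by
  have hs : 1 / q - 1 ≤ 0 := by
    rw [sub_nonpos, div_le_one (by linarith)]; exact hq
  have hq0 : 0 ≤ 1 / q := by positivity
  have hrs : r ^ (1 / q - 1) * r = r ^ (1 / q) := by
    rw [← Real.rpow_add_one hr.ne', sub_add_cancel]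
  have hnε : 0 < n * ε := by positivity
  rcases le_or_gt r ε with hrε | hεr
  · calc r ^ (1 / q - 1) * min r _ ≤ r ^ (1 / q - 1) * r := by gcongr; exact min_le_left _ _
      _ = r ^ (1 / q) := hrs
      _ ≤ ε ^ (1 / q) := by gcongr
      _ ≤ 5 * (n * ε) := by linarith
  have hmin : min r (min (2 * n * (r + ε) + 1) n * ε) ≤ (2 * n * (r + ε) + 1) * ε :=
    (min_le_right _ _).trans (by gcongr; exact min_le_left _ _)
  rcases le_or_gt (n * r) 1 with hnr | hnr
  · calc r ^ (1 / q - 1) * min r _ ≤ ε ^ (1 / q - 1) * (5 * ε) := by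
          gcongr ?_ * ?_
          · exact Real.rpow_le_rpow_of_nonpos hε hεr.le hs
          · refine hmin.trans ?_; gcongr; nlinarith
      _ = 5 * (n * ε) := by
          rw [← hbal, ← sub_add_cancel (1 / q) 1, Real.rpow_add_one hε.ne', sub_add_cancel]
          ring
  rcases le_or_gt r 1 with hr1 | hr1
  · calc r ^ (1 / q - 1) * min r _ ≤ r ^ (1 / q - 1) * (5 * n * r * ε) := by
          gcongr; refine hmin.trans ?_; gcongr; nlinarith
      _ = 5 * (n * ε) * r ^ (1 / q) := by rw [← hrs]; ring
      _ ≤ 5 * (n * ε) := by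
          nlinarith [Real.rpow_le_one hr.le hr1 hq0]
  · calc r ^ (1 / q - 1) * min r _ ≤ 1 * (n * ε) := by
          gcongr ?_ * ?_
          · exact Real.rpow_le_one_of_one_le_of_nonpos hr1.le hs
          · exact (min_le_right _ _).trans (by gcongr; exact min_le_right _ _)
      _ ≤ 5 * (n * ε) := by linarith

variable (d) in
def gridBumps (n : ℕ) (ε : ℝ) : Set (ℝᵈ) :=
  ⋃ j : Fin d → Fin n, ball (gridPoint n j) ε

theorem measurableSet_gridBumps (n : ℕ) (ε : ℝ) : MeasurableSet (gridBumps d n ε) :=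
  MeasurableSet.iUnion fun _ => measurableSet_ball

theorem volume_gridBumps_inter_ball_le {n : ℕ} (hn : 0 < n) {ε r : ℝ} (hε : 0 < ε)
    (hr : 0 < r) (a : ℝᵈ) :
    volume (gridBumps d n ε ∩ ball a r) ≤
      volume (ball a (min r (min (2 * n * (r + ε) + 1) n * ε))) := by
  rcases min_choice r (min (2 * n * (r + ε) + 1) n * ε) with h | h <;> rw [h]
  · exact measure_mono Set.inter_subset_right
  classical
  set G := univ.filter fun j => gridPoint n j ∈ ball a (r + ε)
  have hcover : gridBumps d n ε ∩ ball a r ⊆ ⋃ j ∈ G, ball (gridPoint n j) ε := by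
    rintro y ⟨hy, hya⟩
    obtain ⟨j, hj⟩ := Set.mem_iUnion.mp hy
    refine Set.mem_biUnion (mem_filter.mpr ⟨mem_univ j, ?_⟩) hj
    rw [mem_ball] at hj hya ⊢
    linarith [dist_triangle (gridPoint n j) y a, dist_comm (gridPoint n j) y]
  have hm : 0 < min (2 * n * (r + ε) + 1) n := lt_min (by positivity) (by exact_mod_cast hn)
  have hG := card_le_of_forall_gridPoint_mem_ball hn (by positivity) G
    fun j hj => (mem_filter.mp hj).2
  calc volume (gridBumps d n ε ∩ ball a r)
      ≤ ∑ j ∈ G, volume (ball (gridPoint n j) ε) :=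
        (measure_mono hcover).trans (measure_biUnion_finset_le _ _)
    _ = #G * (ENNReal.ofReal ε ^ d * volume (ball (0 : ℝᵈ) 1)) := by
        simp [volume_ball_eq_ofReal_pow_mul _ hε]
    _ ≤ ENNReal.ofReal (min (2 * n * (r + ε) + 1) n ^ d) *
          (ENNReal.ofReal ε ^ d * volume (ball (0 : ℝᵈ) 1)) := by
        rw [← ENNReal.ofReal_natCast]; gcongr
    _ = volume (ball a (min (2 * n * (r + ε) + 1) n * ε)) := by
        rw [volume_ball_eq_ofReal_pow_mul a (by positivity), ENNReal.ofReal_mul hm.le, mul_pow,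
          ENNReal.ofReal_pow hm.le]
        ring

theorem morreyNormOne_indicator_gridBumps_le {q : ℝ} (hq : 1 ≤ q) {n : ℕ} (hn : 0 < n)
    {ε : ℝ} (hε : 0 < ε) (hbal : ε ^ (1 / q) = n * ε) :
    morreyNormOne d q ((gridBumps d n ε).indicator 1) ≤
      ENNReal.ofReal ((5 * (n * ε)) ^ d) *
        (volume (ball (0 : ℝᵈ) 1) ^ (1 / q - 1) *
          volume (ball (0 : ℝᵈ) 1)) := by
  refine iSup₂_le fun a r => iSup_le fun hr => ?_
  set ρ := min r (min (2 * n * (r + ε) + 1) n * ε)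
  have hρ : 0 < ρ := lt_min hr (mul_pos (lt_min (by positivity) (by exact_mod_cast hn)) hε)
  calc volume (ball a r) ^ (1 / q - 1) * ∫⁻ y in ball a r, (gridBumps d n ε).indicator 1 y
      = volume (ball a r) ^ (1 / q - 1) * volume (gridBumps d n ε ∩ ball a r) := by
        rw [lintegral_indicator_one (measurableSet_gridBumps n ε),
          Measure.restrict_apply (measurableSet_gridBumps n ε)]
    _ ≤ volume (ball a r) ^ (1 / q - 1) * volume (ball a ρ) := by
        exact mul_le_mul_right (volume_gridBumps_inter_ball_le hn hε hr a) _
    _ = ENNReal.ofReal ((r ^ (1 / q - 1) * ρ) ^ d) *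
          (volume (ball (0 : ℝᵈ) 1) ^ (1 / q - 1) *
            volume (ball (0 : ℝᵈ) 1)) := by
        rw [volume_ball_rpow_eq_ofReal_pow_mul a hr, volume_ball_eq_ofReal_pow_mul a hρ,
          ENNReal.ofReal_pow (by positivity), ENNReal.ofReal_mul (by positivity), mul_pow]
        ring
    _ ≤ _ := mul_le_mul_left (ENNReal.ofReal_le_ofReal (pow_le_pow_left₀ (by positivity)
          (rpow_mul_min_le hq (by exact_mod_cast hn) hε hr hbal) d)) _

theorem ofReal_mul_le_morreyNormOne_maximalFn_gridBumps (hd : 1 ≤ d) (q : ℝ) {n : ℕ}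
    (hn : 1 ≤ n) {ε : ℝ} (hε : 0 < ε) {K : ℕ} (hK : 2 ^ (K + 1) * (n * ε) ≤ 1) :
    ENNReal.ofReal (K * ((√d + 1) ^ (1 / q - 1) * (n * ε) / 4) ^ d) *
        (volume (ball (0 : ℝᵈ) 1) ^ (1 / q - 1) *
          volume (ball (0 : ℝᵈ) 1)) ≤
      morreyNormOne d q (maximalFn d ((gridBumps d n ε).indicator 1)) := by
  set R := √d + 1
  set f : ℝᵈ → ℝ := (gridBumps d n ε).indicator 1
  have hn0 : (0 : ℝ) < n := by exact_mod_cast hn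
  have hrad : 2 ^ K * ε + 2 ^ K * ε ≤ (n : ℝ)⁻¹ := by
    rw [← two_mul, inv_eq_one_div, le_div_iff₀ hn0]
    linarith [show (2 : ℝ) ^ (K + 1) * (n * ε) = 2 * (2 ^ K * ε) * n by ring]
  have hdisj : Pairwise
      (Function.onFun Disjoint fun j : Fin d → Fin n => ball (gridPoint n j) (2 ^ K * ε)) :=
    fun j k hjk => ball_disjoint_ball (hrad.trans (inv_le_dist_gridPoint hjk))
  have hsub : ∀ j : Fin d → Fin n, ball (gridPoint n j) (2 ^ K * ε) ⊆ ball 0 R := fun j => by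
    refine ball_subset_ball' ?_
    rw [dist_zero_right]
    linarith [norm_gridPoint_le n j, inv_le_one_of_one_le₀ (Nat.one_le_cast.mpr hn : (1 : ℝ) ≤ n),
      pow_pos (two_pos : (0 : ℝ) < 2) K]
  have hf : ∀ j : Fin d → Fin n, ∀ y ∈ ball (gridPoint n j) ε, 1 ≤ |f y| := fun j y hy => by
    simp [f, Set.indicator_of_mem (show y ∈ gridBumps d n ε from Set.mem_iUnion.mpr ⟨j, hy⟩)]
  have hint : (n ^ d * K : ℝ≥0∞) * (ENNReal.ofReal (ε / 4) ^ d *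
      volume (ball (0 : ℝᵈ) 1)) ≤ ∫⁻ x in ball 0 R, maximalFn d f x :=
    calc _ = ∑ j : Fin d → Fin n, K * volume (ball (gridPoint n j) (ε / 4)) := by
          simp [volume_ball_eq_ofReal_pow_mul _ (by positivity : 0 < ε / 4)]
          ring
      _ ≤ ∑ j, ∫⁻ x in ball (gridPoint n j) (2 ^ K * ε), maximalFn d f x :=
          sum_le_sum fun j _ => natCast_mul_volume_ball_le_lintegral_maximalFn hd hε (hf j) K
      _ = ∫⁻ x in ⋃ j, ball (gridPoint n j) (2 ^ K * ε), maximalFn d f x := by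
          rw [lintegral_iUnion (fun _ => measurableSet_ball) hdisj, tsum_fintype]
      _ ≤ ∫⁻ x in ball 0 R, maximalFn d f x := lintegral_mono_set (Set.iUnion_subset hsub)
  calc _ = volume (ball (0 : ℝᵈ) R) ^ (1 / q - 1) *
        ((n ^ d * K : ℝ≥0∞) * (ENNReal.ofReal (ε / 4) ^ d *
          volume (ball (0 : ℝᵈ) 1))) := by
        have hRs : 0 ≤ R ^ (1 / q - 1) := by positivity
        rw [volume_ball_rpow_eq_ofReal_pow_mul 0 (by positivity : 0 < R),
          show R ^ (1 / q - 1) * (n * ε) / 4 = R ^ (1 / q - 1) * n * (ε / 4) by ring,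
          ENNReal.ofReal_mul K.cast_nonneg,
          ENNReal.ofReal_pow (by positivity), ENNReal.ofReal_mul (by positivity),
          ENNReal.ofReal_mul hRs, ENNReal.ofReal_natCast, ENNReal.ofReal_natCast]
        ring
    _ ≤ volume (ball (0 : ℝᵈ) R) ^ (1 / q - 1) *
          ∫⁻ x in ball 0 R, maximalFn d f x := by gcongr
    _ ≤ _ := le_morreyNormOne q _ 0 (by positivity)

end Euclidean

theorem exists_rpow_one_div_eq_nat_mul {q : ℝ} (hq : 1 < q) (K : ℕ) :
    ∃ (n : ℕ) (ε : ℝ),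
      1 ≤ n ∧ 0 < ε ∧ ε ^ (1 / q) = n * ε ∧ 2 ^ (K + 1) * (n * ε) ≤ 1 := by
  have hq1 : 0 < q - 1 := by linarith
  have hlim : Tendsto (fun n : ℕ => (n : ℝ) ^ (-(1 / (q - 1)))) atTop (𝓝 0) :=
    (tendsto_rpow_neg_atTop (by positivity)).comp tendsto_natCast_atTop_atTop
  obtain ⟨n, hn, hsmall⟩ := ((eventually_ge_atTop 1).and
    (hlim.eventually (eventually_le_nhds (by positivity : (0 : ℝ) < (2 ^ (K + 1))⁻¹)))).exists
  have hn0 : (0 : ℝ) < n := by exact_mod_cast hn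
  have hnε : (n : ℝ) * n ^ (-(q / (q - 1))) = n ^ (-(1 / (q - 1))) := by
    rw [mul_comm, ← Real.rpow_add_one hn0.ne']
    congr 1
    field_simp
    ring
  refine ⟨n, n ^ (-(q / (q - 1))), hn, by positivity, ?_, ?_⟩
  · rw [hnε, ← Real.rpow_mul hn0.le]
    congr 1
    field_simp
  · rw [hnε]
    calc (2 : ℝ) ^ (K + 1) * n ^ (-(1 / (q - 1)))
        ≤ 2 ^ (K + 1) * (2 ^ (K + 1))⁻¹ := by gcongr
      _ = 1 := mul_inv_cancel₀ (by positivity)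

/-- For `1 < q < ∞`, the Hardy-Littlewood maximal operator is not bounded on `M^1_q`:
there is no constant `C > 0` with `‖Mf‖_{M^1_q} ≤ C ‖f‖_{M^1_q}` for all locally
integrable `f` with finite `M^1_q` norm. -/
theorem maximal_not_bounded_on_morreyOne (d : ℕ) (hd : 1 ≤ d) (q : ℝ) (hq : 1 < q) :
    ¬ ∃ C : ℝ, 0 < C ∧ ∀ f : EuclideanSpace ℝ (Fin d) → ℝ,
      LocallyIntegrable f volume →
      morreyNormOne d q (fun x => ENNReal.ofReal |f x|) < ⊤ →
      morreyNormOne d q (maximalFn d f) ≤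
        ENNReal.ofReal C * morreyNormOne d q (fun x => ENNReal.ofReal |f x|) := by
  rintro ⟨C, hC, hbound⟩
  set R := (√d + 1) ^ (1 / q - 1)
  obtain ⟨K, hK⟩ := exists_nat_gt (C * (20 / R) ^ d)
  obtain ⟨n, ε, hn, hε, hbal, hsmall⟩ := exists_rpow_one_div_eq_nat_mul hq K
  set f : EuclideanSpace ℝ (Fin d) → ℝ := (gridBumps d n ε).indicator 1
  have hf : (fun x => ENNReal.ofReal |f x|) = (gridBumps d n ε).indicator 1 := by
    ext x; by_cases hx : x ∈ gridBumps d n ε <;> simp [f, hx]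
  have hupper := hf ▸ morreyNormOne_indicator_gridBumps_le hq.le hn hε hbal
  have hV0 := (measure_ball_pos volume (0 : EuclideanSpace ℝ (Fin d)) one_pos).ne'
  have hVtop : volume (ball (0 : EuclideanSpace ℝ (Fin d)) 1) ≠ ⊤ := measure_ball_lt_top.ne
  have hchain := (ofReal_mul_le_morreyNormOne_maximalFn_gridBumps hd q hn hε hsmall).trans <|
    (hbound f ((locallyIntegrable_const 1).indicator (measurableSet_gridBumps n ε))
      (hupper.trans_lt (by finiteness))).trans (mul_le_mul_right hupper _)
  rw [← mul_assoc (ENNReal.ofReal C), ← ENNReal.ofReal_mul hC.le, ENNReal.mul_le_mul_iff_left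
    (mul_ne_zero (ENNReal.rpow_pos hV0.bot_lt hVtop).ne' hV0)
    (ENNReal.mul_ne_top (ENNReal.rpow_ne_top_of_ne_zero hV0 hVtop) hVtop),
    ENNReal.ofReal_le_ofReal_iff (by positivity)] at hchain
  have hR : 0 < R := by positivity
  have hKR : (K : ℝ) * (R * (n * ε) / 4) ^ d ≤ C * (20 / R) ^ d * (R * (n * ε) / 4) ^ d := by
    refine hchain.trans_eq ?_
    rw [mul_assoc, ← mul_pow]
    congr 2
    field_simp
    ring
  linarith [le_of_mul_le_mul_right hKR (by positivity)]
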